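/- arXiv:2201.08644 — 2 statements merged into one kernel-verified Lean document; each statement's English description precedes it below -/
import Mathlib

section
/- If λ ∈ Γ_k (the k-th Garding cone) and 1 ≤ i ≤ n, then σ_{k-1}(λ | i) > 0, where σ_{k-1}(λ | i) denotes the (k-1)-th elementary symmetric function of λ with the variable λ_i deleted. -/
open Finset

/-- The k-th elementary symmetric function of x = (x_1,...,x_n). -/
noncomputable def esymm (n k : ℕ) (x : Fin n → ℝ) : ℝ :=
  ∑ s ∈ (Finset.univ : Finset (Fin n)).powersetCard k, ∏ i ∈ s, x i

/-- σ_k(x | i): the k-th elementary symmetric function of x with the i-th entry deleted. -/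
noncomputable def esymmDel (n k : ℕ) (x : Fin n → ℝ) (i : Fin n) : ℝ :=
  ∑ s ∈ ((Finset.univ : Finset (Fin n)).erase i).powersetCard k, ∏ j ∈ s, x j

/-- The Garding cone Γ_k = {x : σ_j(x) > 0 for all 1 ≤ j ≤ k}. -/
def gardingCone (n k : ℕ) : Set (Fin n → ℝ) :=
  {x | ∀ j : ℕ, 1 ≤ j → j ≤ k → 0 < esymm n j x}

/-- σ_k for integer index, with the convention σ_k = 0 for k < 0. -/
noncomputable def esymmZ (n : ℕ) (k : ℤ) (x : Fin n → ℝ) : ℝ :=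
  if k < 0 then 0 else esymm n k.toNat x

/-- σ_k(x|i) for integer index, with the convention σ_k = 0 for k < 0. -/
noncomputable def esymmDelZ (n : ℕ) (k : ℤ) (x : Fin n → ℝ) (i : Fin n) : ℝ :=
  if k < 0 then 0 else esymmDel n k.toNat x i

/-!
Write `λ` as the multiset `a ::ₘ s` with `a = λ_i`, so that `σ_j(λ) = σ_j(s) + a σ_{j-1}(s)`,
and show `σ_k(s) > 0` for `λ ∈ Γ_{k+1}` by induction on `k`. If `σ_k(s) ≤ 0`, shift all entries
by `t ≥ 0`: `σ_k(s + t)` is continuous in `t` and positive for large `t`, so it vanishes at some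
`t ≥ 0`. The shift keeps `λ` in the Gårding cone: `∏ (X + r + t)` is the Taylor shift `p(X + t)`
of `p = ∏ (X + r)`, whose coefficients are the `σ_j`, and a Taylor shift by `t ≥ 0` keeps a
coefficient positive when all higher ones are nonnegative. At that `t`, Newton's inequality for
the real-rooted polynomial `∏ (X + r + t)` (a consequence of the Laguerre inequality
`p p'' ≤ p'²` and Rolle's theorem) together with `σ_{k-1}(s + t) > 0` (induction) gives
`σ_{k+1}(s + t) ≤ 0`, hence `σ_{k+1}(λ + t) = σ_{k+1}(s + t) ≤ 0`, a contradiction.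
-/

open Polynomial
open scoped Nat

namespace Polynomial

theorem Splits.derivative_real {p : ℝ[X]} (hp : p.Splits) : p.derivative.Splits := by
  rcases eq_or_ne p.derivative 0 with h | h
  · rw [h]; exact Splits.zero
  have hdeg : p.natDegree ≠ 0 := fun h0 => h (derivative_of_natDegree_zero h0)
  have hrolle := p.card_roots_le_derivative
  have hdeg' := natDegree_derivative_le p
  have hroots := p.derivative.card_roots'
  rw [splits_iff_card_roots] at hp ⊢
  omega

theorem Splits.iterate_derivative_real {p : ℝ[X]} (hp : p.Splits) (a : ℕ) :
    (derivative^[a] p).Splits := by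
  induction a with
  | zero => exact hp
  | succ a ih => rw [Function.iterate_succ_apply']; exact ih.derivative_real

/-- The defect `p p'' - p'²` of a product `f g` is `g² (f f'' - f'²) + f² (g g'' - g'²)`, so it
suffices to check linear factors. -/
theorem Splits.eval_mul_eval_derivative_derivative_le {R : Type*} [CommRing R] [LinearOrder R]
    [IsStrictOrderedRing R] {p : R[X]} (hp : p.Splits) (t : R) :
    p.eval t * (derivative (derivative p)).eval t ≤ (derivative p).eval t ^ 2 := by
  induction hp using Submonoid.closure_induction with
  | mem q hq =>
    obtain ⟨a, rfl⟩ | ⟨a, rfl⟩ := hq <;> simp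
  | one => simp
  | mul f g _ _ hf hg =>
    simp only [derivative_mul, derivative_add, eval_add, eval_mul]
    nlinarith [mul_le_mul_of_nonneg_left hf (sq_nonneg (g.eval t)),
      mul_le_mul_of_nonneg_left hg (sq_nonneg (f.eval t))]

theorem iterate_derivative_eval_zero {R : Type*} [CommSemiring R] (p : R[X]) (a : ℕ) :
    (derivative^[a] p).eval 0 = a ! * p.coeff a := by
  rw [← coeff_zero_eq_eval_zero, coeff_iterate_derivative, zero_add, Nat.descFactorial_self,
    nsmul_eq_mul]

theorem Splits.factorial_mul_coeff_mul_coeff_le {p : ℝ[X]} (hp : p.Splits) (a : ℕ) :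
    (a ! * (a + 2)! : ℝ) * (p.coeff a * p.coeff (a + 2)) ≤
      ((a + 1)! : ℝ) ^ 2 * p.coeff (a + 1) ^ 2 := by
  have h := (hp.iterate_derivative_real a).eval_mul_eval_derivative_derivative_le 0
  simp only [← Function.iterate_succ_apply' derivative, iterate_derivative_eval_zero] at h
  linarith

theorem taylor_coeff_pos {R : Type*} [CommRing R] [LinearOrder R] [IsStrictOrderedRing R]
    {p : R[X]} {a : ℕ} {t : R} (ht : 0 ≤ t) (hpos : 0 < p.coeff a)
    (hnonneg : ∀ b, a < b → 0 ≤ p.coeff b) : 0 < (taylor t p).coeff a := by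
  rw [taylor_coeff, eval_eq_sum_range]
  refine Finset.sum_pos' (fun i _ => ?_) ⟨0, by simp, by simpa [hasseDeriv_coeff] using hpos⟩
  rw [hasseDeriv_coeff]
  rcases Nat.eq_zero_or_pos i with rfl | hi
  · simpa using hpos.le
  · have := hnonneg (i + a) (by omega)
    positivity

end Polynomial

namespace Multiset

section CommSemiring

variable {R : Type*} [CommSemiring R]

theorem esymm_zero (s : Multiset R) : s.esymm 0 = 1 := by
  simp [esymm]

theorem esymm_eq_zero_of_card_lt {s : Multiset R} {k : ℕ} (hk : card s < k) : s.esymm k = 0 := by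
  simp [esymm, powersetCard_eq_empty k hk]

theorem esymm_cons_succ (a : R) (s : Multiset R) (k : ℕ) :
    (a ::ₘ s).esymm (k + 1) = s.esymm (k + 1) + a * s.esymm k := by
  simp [esymm, powersetCard_cons, sum_map_mul_left]

theorem natDegree_prod_X_add_C [Nontrivial R] (s : Multiset R) :
    (s.map fun r => X + C r).prod.natDegree = card s := by
  rw [natDegree_multiset_prod_of_monic _ (by simp [monic_X_add_C])]
  simp

theorem prod_map_X_add_C_add (s : Multiset R) (t : R) :
    (s.map fun r => X + C (r + t)).prod = taylor t (s.map fun r => X + C r).prod := by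
  rw [taylor_apply, multiset_prod_comp, map_map]
  congr 1
  refine map_congr rfl fun r _ => ?_
  simp only [Function.comp_apply, add_comp, X_comp, C_comp, C_add]
  ring

theorem esymm_map_add (s : Multiset R) (t : R) {k : ℕ} (hk : k ≤ card s) :
    (s.map (· + t)).esymm k = (taylor t (s.map fun r => X + C r).prod).coeff (card s - k) := by
  have hcoeff := prod_X_add_C_coeff (s.map (· + t)) (k := card s - k) (by simp)
  rw [card_map, Nat.sub_sub_self hk, map_map] at hcoeff
  rw [← hcoeff, ← prod_map_X_add_C_add]
  rfl

end CommSemiring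

theorem esymm_pos_of_forall_pos {s : Multiset ℝ} (hs : ∀ r ∈ s, 0 < r) {k : ℕ} (hk : k ≤ card s) :
    0 < s.esymm k := by
  have hne : s.powersetCard k ≠ ∅ := by
    rw [Ne, empty_eq_zero, ← card_eq_zero, card_powersetCard]
    exact (Nat.choose_pos hk).ne'
  simpa [esymm] using sum_lt_sum_of_nonempty (f := fun _ => (0 : ℝ)) hne fun u hu =>
    prod_pos fun r hr => hs r (mem_of_le (mem_powersetCard.1 hu).1 hr)

theorem exists_esymm_map_add_pos (s : Multiset ℝ) {k : ℕ} (hk : k ≤ card s) :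
    ∃ T, 0 ≤ T ∧ 0 < (s.map (· + T)).esymm k := by
  obtain ⟨M, hM⟩ := s.toFinset.bddBelow
  refine ⟨|M| + 1, by positivity, esymm_pos_of_forall_pos ?_ (by simpa using hk)⟩
  simp only [mem_map, forall_exists_index, and_imp, forall_apply_eq_imp_iff₂]
  intro r hr
  have : M ≤ r := hM (by simpa using hr)
  linarith [neg_abs_le M]

theorem continuous_esymm_map_add (s : Multiset ℝ) (k : ℕ) :
    Continuous fun t => (s.map (· + t)).esymm k := by
  rcases le_or_gt k (card s) with hk | hk
  · simp_rw [esymm_map_add s _ hk, taylor_coeff]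
    exact Polynomial.continuous _
  · simp_rw [esymm_eq_zero_of_card_lt (s := s.map _) (by simpa using hk)]
    exact continuous_const

theorem esymm_nonpos_of_esymm_eq_zero {s : Multiset ℝ} {k : ℕ} (h : s.esymm (k + 1) = 0)
    (hk : 0 < s.esymm k) : s.esymm (k + 2) ≤ 0 := by
  rcases lt_or_ge (card s) (k + 2) with hs | hs
  · exact (esymm_eq_zero_of_card_lt hs).le
  obtain ⟨a, ha⟩ : ∃ a, card s = a + k + 2 := ⟨card s - (k + 2), by omega⟩
  have hsplits : (s.map fun r => X + C r).prod.Splits :=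
    Splits.multisetProd fun _ hp => by
      obtain ⟨r, -, rfl⟩ := mem_map.1 hp
      exact Splits.X_add_C r
  have hnewton := hsplits.factorial_mul_coeff_mul_coeff_le a
  rw [prod_X_add_C_coeff _ (by omega), prod_X_add_C_coeff _ (by omega),
    prod_X_add_C_coeff _ (by omega), ha, show a + k + 2 - a = k + 2 by omega,
    show a + k + 2 - (a + 1) = k + 1 by omega, show a + k + 2 - (a + 2) = k by omega, h] at hnewton
  have hfact : (0 : ℝ) < a ! * (a + 2)! := by positivity
  have hprod : s.esymm (k + 2) * s.esymm k ≤ 0 :=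
    le_of_mul_le_mul_left (by simpa using hnewton) hfact
  exact nonpos_of_mul_nonpos_left hprod hk

def InGardingCone (k : ℕ) (s : Multiset ℝ) : Prop :=
  ∀ j, 1 ≤ j → j ≤ k → 0 < s.esymm j

theorem InGardingCone.mono {k l : ℕ} {s : Multiset ℝ} (hs : s.InGardingCone l) (hkl : k ≤ l) :
    s.InGardingCone k :=
  fun j hj1 hjk => hs j hj1 (hjk.trans hkl)

theorem InGardingCone.map_add {k : ℕ} {s : Multiset ℝ} (hs : s.InGardingCone k) {t : ℝ}
    (ht : 0 ≤ t) : (s.map (· + t)).InGardingCone k := by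
  intro j hj1 hjk
  have hjs : j ≤ card s := by
    by_contra! h
    exact (hs j hj1 hjk).ne' (esymm_eq_zero_of_card_lt h)
  rw [esymm_map_add s t hjs]
  refine taylor_coeff_pos ht ?_ fun b hb => ?_
  · rw [prod_X_add_C_coeff _ (Nat.sub_le _ _), Nat.sub_sub_self hjs]
    exact hs j hj1 hjk
  rcases le_or_gt b (card s) with hbs | hbs
  · rw [prod_X_add_C_coeff _ hbs]
    rcases Nat.eq_zero_or_pos (card s - b) with h0 | h0
    · rw [h0, esymm_zero]
      exact zero_le_one
    · exact (hs _ h0 (by omega)).le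
  · rw [coeff_eq_zero_of_natDegree_lt (by rwa [natDegree_prod_X_add_C])]

theorem InGardingCone.esymm_pos_of_cons {k : ℕ} {a : ℝ} {s : Multiset ℝ}
    (h : (a ::ₘ s).InGardingCone (k + 1)) : 0 < s.esymm k := by
  induction k generalizing a s with
  | zero => simp [esymm_zero]
  | succ k ih =>
    by_contra! hle
    have hcard : k + 1 ≤ card s := by
      by_contra! hs
      exact (h (k + 2) (by omega) le_rfl).ne' (esymm_eq_zero_of_card_lt (by simpa using hs))
    obtain ⟨T, hT, hpos⟩ := exists_esymm_map_add_pos s hcard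
    obtain ⟨t, ⟨ht, -⟩, hzero : (s.map (· + t)).esymm (k + 1) = 0⟩ :=
      intermediate_value_Icc hT
        (continuous_esymm_map_add s (k + 1)).continuousOn ⟨by simpa using hle, hpos.le⟩
    have hshift : ((a + t) ::ₘ s.map (· + t)).InGardingCone (k + 2) := by
      simpa using h.map_add ht
    have hnonpos := esymm_nonpos_of_esymm_eq_zero hzero (ih (hshift.mono (by omega)))
    have hcons := hshift (k + 2) (by omega) le_rfl
    rw [esymm_cons_succ, hzero, mul_zero, add_zero] at hcons
    linarith

end Multiset

theorem esymm_eq_esymm_map_univ (n k : ℕ) (x : Fin n → ℝ) :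
    esymm n k x = (univ.val.map x).esymm k :=
  (Finset.esymm_map_val x univ k).symm

theorem esymmDel_eq_esymm_map_erase (n k : ℕ) (x : Fin n → ℝ) (i : Fin n) :
    esymmDel n k x i = ((univ.erase i).val.map x).esymm k :=
  (Finset.esymm_map_val x (univ.erase i) k).symm

theorem map_univ_val_eq_cons {n : ℕ} (x : Fin n → ℝ) (i : Fin n) :
    univ.val.map x = x i ::ₘ (univ.erase i).val.map x := by
  rw [erase_val, ← Multiset.map_cons, Multiset.cons_erase (mem_univ i)]

theorem mem_gardingCone_iff {n k : ℕ} {x : Fin n → ℝ} :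
    x ∈ gardingCone n k ↔ (univ.val.map x).InGardingCone k := by
  simp only [gardingCone, Set.mem_ofPred_eq, Multiset.InGardingCone, esymm_eq_esymm_map_univ]

theorem esymmDel_pos_of_mem_gardingCone_general (n k : ℕ)
    (x : Fin n → ℝ) (hx : x ∈ gardingCone n k) (i : Fin n) :
    0 < esymmDel n (k - 1) x i := by
  rw [esymmDel_eq_esymm_map_erase]
  cases k with
  | zero => simp [Multiset.esymm_zero]
  | succ k =>
    rw [mem_gardingCone_iff, map_univ_val_eq_cons x i] at hx
    exact hx.esymm_pos_of_cons

/-- If λ ∈ Γ_k then σ_{k-1}(λ|i) > 0 for every 1 ≤ i ≤ n. -/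
theorem esymmDel_pos_of_mem_gardingCone (n k : ℕ) (hk1 : 1 ≤ k) (hkn : k ≤ n)
    (x : Fin n → ℝ) (hx : x ∈ gardingCone n k) (i : Fin n) :
    0 < esymmDel n (k - 1) x i :=
  esymmDel_pos_of_mem_gardingCone_general n k x hx i
end

section
/- Let 0 ≤ l < k ≤ n, λ ∈ Γ_k, and F(λ) = [σ_k(λ)/σ_l(λ)]^{1/(k-l)} with F^{ii} = ∂F/∂λ_i. Then Σ_{i=1}^n F^{ii}(λ) ≥ (C(n,k)/C(n,l))^{1/(k-l)}, where C(n,j) is the binomial coefficient. -/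
open Finset

/-! With the means `E j = σ_j / C(n,j)`, Newton's inequalities
`E j * E (j + 2) ≤ E (j + 1) ^ 2` hold for every real `λ`: differentiating `∏ (X + λ_i)`
`n - j - 2` times, reversing it and differentiating `j` more times leaves, up to a constant, the
quadratic `E (j + 2) X² + 2 E (j + 1) X + E j`, which still has a real root because
real-rootedness survives differentiation (Rolle) and reversal. On `Γ_k` the `E j`, `j ≤ k`, are
positive, so the ratios `q j = E (j + 1) / E j` decrease for `j < k`.

Since `∑ i, σ_m(λ|i) = (n - m) σ_m`, the sum `∑ F^{ii}` is `(C(n,k)/C(n,l))^{1/(k-l)}` times an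
expression in `E (l-1), E l, E (k-1), E k`. The geometric mean `w = (E k / E l)^{1/(k-l)}` of
`q l, …, q (k-1)` satisfies `q (k-1) ≤ w ≤ q (l-1)`, i.e. `E (k-1) / E l ≥ w^{k-l-1}` and
`E (l-1) / E l ≤ 1 / w`, and these two bounds make that expression at least `1`. -/

open Polynomial

namespace Polynomial

theorem Splits.reverse {K : Type*} [Field K] {p : K[X]} (hp : p.Splits) : p.reverse.Splits := by
  induction hp using Submonoid.closure_induction with
  | mem f hf =>
    rcases hf with ⟨a, rfl⟩ | ⟨a, rfl⟩
    · simp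
    · exact .of_natDegree_le_one ((reverse_natDegree_le _).trans (natDegree_X_add_C a).le)
  | one => simpa only [← C_1, reverse_C] using Splits.C 1
  | mul f g _ _ hf hg => simpa only [reverse_mul_of_domain] using hf.mul hg

theorem reflect_eq_reverse_mul_X_pow {R : Type*} [Semiring R] {p : R[X]} {N : ℕ}
    (hN : p.natDegree ≤ N) : p.reflect N = p.reverse * X ^ (N - p.natDegree) := by
  have := reflect_mul p 1 le_rfl (natDegree_one.trans_le (Nat.zero_le (N - p.natDegree)))
  rwa [mul_one, Nat.add_sub_cancel' hN, reflect_one] at this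

theorem Splits.reflect {K : Type*} [Field K] {p : K[X]} (hp : p.Splits) {N : ℕ}
    (hN : p.natDegree ≤ N) : (p.reflect N).Splits := by
  rw [reflect_eq_reverse_mul_X_pow hN]
  exact hp.reverse.mul (Splits.X_pow _)

theorem Splits.derivative {p : ℝ[X]} (hp : p.Splits) : (Polynomial.derivative p).Splits := by
  rw [splits_iff_card_roots] at hp ⊢
  have := card_roots_le_derivative p
  have := natDegree_derivative_le p
  have := card_roots' (Polynomial.derivative p)
  omega

theorem Splits.iterate_derivative {p : ℝ[X]} (hp : p.Splits) (r : ℕ) :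
    (Polynomial.derivative^[r] p).Splits := by
  induction r with
  | zero => exact hp
  | succ r ih => simpa only [Function.iterate_succ_apply'] using ih.derivative

end Polynomial

section BinomialForm

variable {K : Type*} [Field K]

def IsBinomialForm (N : ℕ) (e : ℕ → K) (p : K[X]) : Prop :=
  ∃ c ≠ 0, ∀ m, p.coeff m = c * N.choose m * e m

namespace IsBinomialForm

variable {N : ℕ} {e : ℕ → K} {p : K[X]}

theorem natDegree_le (h : IsBinomialForm N e p) : p.natDegree ≤ N := by
  obtain ⟨c, -, hc⟩ := h
  refine natDegree_le_iff_coeff_eq_zero.mpr fun m hm => ?_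
  rw [hc, Nat.choose_eq_zero_of_lt (by exact_mod_cast hm)]
  simp

theorem reflect (h : IsBinomialForm N e p) :
    IsBinomialForm N (fun m => e (N - m)) (p.reflect N) := by
  obtain ⟨c, hc0, hc⟩ := h
  refine ⟨c, hc0, fun m => ?_⟩
  rw [coeff_reflect, hc]
  rcases le_or_gt m N with hm | hm
  · rw [revAt_le hm, Nat.choose_symm hm]
  · simp [revAt_eq_self_of_lt hm, Nat.choose_eq_zero_of_lt hm]

theorem derivative [CharZero K] (h : IsBinomialForm (N + 1) e p) :
    IsBinomialForm N (fun m => e (m + 1)) (derivative p) := by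
  obtain ⟨c, hc0, hc⟩ := h
  refine ⟨c * (N + 1), mul_ne_zero hc0 (by exact_mod_cast N.succ_ne_zero), fun m => ?_⟩
  have hchoose : ((N : K) + 1) * N.choose m = (N + 1).choose (m + 1) * (m + 1) := by
    exact_mod_cast Nat.add_one_mul_choose_eq N m
  rw [coeff_derivative, hc]
  linear_combination -(c * e (m + 1)) * hchoose

theorem iterate_derivative [CharZero K] {r : ℕ} (h : IsBinomialForm (r + N) e p) :
    IsBinomialForm N (fun m => e (m + r)) (Polynomial.derivative^[r] p) := by
  induction r generalizing e p with
  | zero => simpa using h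
  | succ r ih =>
    rw [Function.iterate_succ_apply]
    have h' : IsBinomialForm (r + N + 1) e p := by rwa [Nat.add_right_comm] at h
    simpa only [add_assoc, Nat.add_comm 1 r] using ih h'.derivative

theorem sq_le_of_splits [LinearOrder K] [IsStrictOrderedRing K] (h : IsBinomialForm 2 e p)
    (hp : p.Splits) : e 0 * e 2 ≤ e 1 ^ 2 := by
  obtain ⟨c, hc0, hc⟩ := id h
  by_cases he : e 2 = 0
  · rw [he, mul_zero]
    positivity
  have hdeg : p.natDegree = 2 :=
    h.natDegree_le.antisymm (le_natDegree_of_ne_zero (by simp [hc, hc0, he]))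
  obtain ⟨a, ha⟩ := hp.exists_eval_eq_zero
    (by rw [degree_eq_natDegree (by rintro rfl; simp at hdeg), hdeg]; decide)
  rw [eval_eq_sum_range, hdeg] at ha
  simp only [Finset.sum_range_succ, Finset.sum_range_zero, hc] at ha
  have hroot : c * (e 0 + 2 * e 1 * a + e 2 * a ^ 2) = 0 := by
    rw [← ha]; norm_num [Nat.choose]; ring
  replace hroot := (mul_eq_zero.mp hroot).resolve_left hc0
  nlinarith [sq_nonneg (e 2 * a + e 1), mul_eq_zero_of_right (e 2) hroot]

end IsBinomialForm

end BinomialForm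

noncomputable def esymmMean (n k : ℕ) (x : Fin n → ℝ) : ℝ :=
  esymm n k x / n.choose k

theorem esymm_eq_choose_mul_esymmMean {n k : ℕ} (hk : k ≤ n) (x : Fin n → ℝ) :
    esymm n k x = n.choose k * esymmMean n k x := by
  rw [esymmMean, mul_div_cancel₀]
  exact_mod_cast (Nat.choose_pos hk).ne'

theorem isBinomialForm_prod_X_add_C {n : ℕ} (x : Fin n → ℝ) :
    IsBinomialForm n (fun m => esymmMean n (n - m) x) (∏ i, (X + C (x i))) := by
  refine ⟨1, one_ne_zero, fun m => ?_⟩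
  rcases le_or_gt m n with hm | hm
  · dsimp only
    rw [Finset.prod_X_add_C_coeff _ _ (by simpa using hm), one_mul, ← Nat.choose_symm hm,
      ← esymm_eq_choose_mul_esymmMean (Nat.sub_le n m)]
    simp [esymm]
  · rw [coeff_eq_zero_of_natDegree_lt, Nat.choose_eq_zero_of_lt hm]
    · simp
    · rw [natDegree_prod_of_monic _ _ fun i _ => monic_X_add_C (x i)]
      simpa using hm

theorem esymmMean_mul_le_sq {n j : ℕ} (hj : j + 2 ≤ n) (x : Fin n → ℝ) :
    esymmMean n j x * esymmMean n (j + 2) x ≤ esymmMean n (j + 1) x ^ 2 := by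
  obtain ⟨r, rfl⟩ : ∃ r, n = r + (j + 2) := ⟨n - (j + 2), by omega⟩
  have hP := isBinomialForm_prod_X_add_C x
  have hPs : (∏ i, (X + C (x i))).Splits := Splits.prod fun i _ => Splits.X_add_C (x i)
  have hQ := hP.iterate_derivative (r := r) (N := j + 2)
  have hQs := hPs.iterate_derivative r
  have hT := hQ.reflect.iterate_derivative (r := j) (N := 2)
  have hTs := (hQs.reflect hQ.natDegree_le).iterate_derivative j
  -- `rfl` matches the order on `ℝ` with the one coming from its `LinearOrder` instance
  convert hT.sq_le_of_splits hTs using 3 <;> first | rfl | omega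

theorem sum_esymmDel (n m : ℕ) (x : Fin n → ℝ) :
    ∑ i, esymmDel n m x i = (n - m : ℕ) * esymm n m x := by
  have hset (i : Fin n) :
      (univ.erase i).powersetCard m = (univ.powersetCard m).filter (i ∉ ·) := by
    ext s
    simp only [mem_powersetCard, mem_filter, subset_erase]
    tauto
  simp only [esymmDel, esymm, hset, sum_filter]
  rw [sum_comm, mul_sum]
  refine sum_congr rfl fun s hs => ?_
  rw [← sum_filter, sum_const, nsmul_eq_mul, filter_not, filter_mem_eq_inter, univ_inter,
    ← compl_eq_univ_sdiff, card_compl, Fintype.card_fin, (mem_powersetCard.mp hs).2]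

theorem sum_esymmDel_pred {n m : ℕ} (hm0 : 1 ≤ m) (hmn : m ≤ n) (x : Fin n → ℝ) :
    ∑ i, esymmDel n (m - 1) x i = m * n.choose m * esymmMean n (m - 1) x := by
  have hchoose : (n.choose m : ℝ) * m = n.choose (m - 1) * (n - (m - 1) : ℕ) := by
    have := Nat.choose_succ_right_eq n (m - 1)
    rw [Nat.sub_add_cancel hm0] at this
    exact_mod_cast this
  rw [sum_esymmDel, esymm_eq_choose_mul_esymmMean (by omega)]
  linear_combination -(esymmMean n (m - 1) x) * hchoose

theorem sum_esymmDelZ_pred {n m : ℕ} (hmn : m ≤ n) (x : Fin n → ℝ) :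
    ∑ i, esymmDelZ n ((m : ℤ) - 1) x i = m * n.choose m * esymmMean n (m - 1) x := by
  rcases Nat.eq_zero_or_pos m with rfl | hm0
  · simp [esymmDelZ]
  · have htoNat : ((m : ℤ) - 1).toNat = m - 1 := by omega
    simp only [esymmDelZ, if_neg (by omega : ¬((m : ℤ) - 1 < 0)), htoNat]
    exact sum_esymmDel_pred hm0 hmn x

section LogConcave

variable {E : ℕ → ℝ} {k : ℕ}

theorem antitoneOn_div_of_logConcave (hpos : ∀ j ≤ k, 0 < E j)
    (hlc : ∀ j, j + 2 ≤ k → E j * E (j + 2) ≤ E (j + 1) ^ 2) :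
    AntitoneOn (fun j => E (j + 1) / E j) (Set.Iio k) := by
  intro a _ b hb hab
  induction b, hab using Nat.le_induction with
  | base => rfl
  | succ b hab ih =>
    simp only [Set.mem_Iio] at hb
    refine le_trans ?_ (ih (by simp only [Set.mem_Iio]; omega))
    rw [div_le_div_iff₀ (hpos _ (by omega)) (hpos _ (by omega))]
    nlinarith [hlc b (by omega)]

theorem div_le_rpow_and_rpow_le_div_of_antitoneOn {l : ℕ} (hlk : l < k)
    (hpos : ∀ j ≤ k, 0 < E j) (hq : AntitoneOn (fun j => E (j + 1) / E j) (Set.Iio k)) :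
    E k / E (k - 1) ≤ (E k / E l) ^ ((k - l : ℕ) : ℝ)⁻¹ ∧
      (E k / E l) ^ ((k - l : ℕ) : ℝ)⁻¹ ≤ E (l + 1) / E l := by
  have hmem : ∀ j, j < k → j ∈ Set.Iio k := fun j hj => hj
  have hratio : ∀ i < k - l, E k / E (k - 1) ≤ E (l + i + 1) / E (l + i) ∧
      E (l + i + 1) / E (l + i) ≤ E (l + 1) / E l := fun i hi => by
    refine ⟨?_, hq (a := l) (hmem _ (by omega)) (hmem _ (by omega)) (by omega)⟩
    simpa [Nat.sub_add_cancel (by omega : 1 ≤ k)] using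
      hq (a := l + i) (b := k - 1) (hmem _ (by omega)) (hmem _ (by omega)) (by omega)
  have hstep : ∀ i < k - l, E (l + (i + 1)) = E (l + i + 1) / E (l + i) * E (l + i) :=
    fun i hi => (div_mul_cancel₀ _ (hpos _ (by omega)).ne').symm
  have hk : E k = E (l + (k - l)) := by rw [Nat.add_sub_cancel' hlk.le]
  have hEl := hpos l hlk.le
  have hlow : (E k / E (k - 1)) ^ (k - l) * E l ≤ E k := by
    nth_rewrite 2 [hk]
    refine geom_le (u := fun i => E (l + i)) (div_pos (hpos _ le_rfl) (hpos _ (by omega))).le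
      (k - l) fun i hi => ?_
    rw [hstep i hi]
    exact mul_le_mul_of_nonneg_right (hratio i hi).1 (hpos _ (by omega)).le
  have hupp : E k ≤ (E (l + 1) / E l) ^ (k - l) * E l := by
    nth_rewrite 1 [hk]
    refine le_geom (u := fun i => E (l + i)) (div_pos (hpos _ (by omega)) hEl).le
      (k - l) fun i hi => ?_
    rw [hstep i hi]
    exact mul_le_mul_of_nonneg_right (hratio i hi).2 (hpos _ (by omega)).le
  have hd0 : k - l ≠ 0 := by omega
  have hv0 : 0 ≤ E k / E l := (div_pos (hpos k le_rfl) hEl).le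
  constructor
  · rw [← pow_le_pow_iff_left₀ (div_pos (hpos k le_rfl) (hpos _ (by omega))).le
      (by positivity) hd0, Real.rpow_inv_natCast_pow hv0 hd0, le_div_iff₀ hEl]
    exact hlow
  · rw [← pow_le_pow_iff_left₀ (by positivity) (div_pos (hpos _ (by omega)) hEl).le hd0,
      Real.rpow_inv_natCast_pow hv0 hd0, div_le_iff₀ hEl]
    exact hupp

end LogConcave

noncomputable def traceFactor (E : ℕ → ℝ) (k l : ℕ) : ℝ :=
  1 / ((k : ℝ) - l) * (E k / E l) ^ (1 / ((k : ℝ) - l) - 1) *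
    (k * (E (k - 1) / E l) - l * (E k / E l) * (E (l - 1) / E l))

theorem one_le_traceFactor {E : ℕ → ℝ} {k l : ℕ} (hlk : l < k) (hpos : ∀ j ≤ k, 0 < E j)
    (hlc : ∀ j, j + 2 ≤ k → E j * E (j + 2) ≤ E (j + 1) ^ 2) : 1 ≤ traceFactor E k l := by
  have hq := antitoneOn_div_of_logConcave hpos hlc
  obtain ⟨hkw, hlw⟩ := div_le_rpow_and_rpow_le_div_of_antitoneOn hlk hpos hq
  set d := k - l with hd
  have hd0 : d ≠ 0 := by omega
  have hdR : (k : ℝ) - l = d := by rw [hd, Nat.cast_sub hlk.le]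
  have hEl := hpos l hlk.le
  set v := E k / E l with hv
  have hv0 : 0 < v := div_pos (hpos k le_rfl) hEl
  set w := v ^ ((d : ℝ)⁻¹)
  have hw0 : 0 < w := Real.rpow_pos_of_pos hv0 _
  have hvw : v / w = w ^ (d - 1) := by
    rw [div_eq_iff hw0.ne', ← pow_succ, Nat.sub_add_cancel (Nat.one_le_iff_ne_zero.mpr hd0),
      Real.rpow_inv_natCast_pow hv0.le hd0]
  have hI : w ^ (d - 1) ≤ E (k - 1) / E l := by
    have hEk1 := hpos (k - 1) (by omega)
    rw [← hvw, div_le_iff₀ hw0]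
    calc v = E (k - 1) / E l * (E k / E (k - 1)) := by
          rw [hv]; field_simp [hEk1.ne']
      _ ≤ E (k - 1) / E l * w := by gcongr
  have hII : (l : ℝ) * v * (E (l - 1) / E l) ≤ l * w ^ (d - 1) := by
    rcases eq_or_ne l 0 with hl | hl
    · simp [hl]
    have hEl1 := hpos (l - 1) (by omega)
    have hwl : w ≤ E l / E (l - 1) := hlw.trans <| by
      simpa [Nat.sub_add_cancel (Nat.one_le_iff_ne_zero.mpr hl)] using
        hq (a := l - 1) (b := l) (by simp only [Set.mem_Iio]; omega)
          (by simp only [Set.mem_Iio]; omega) (by omega)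
    rw [mul_assoc, ← hvw]
    gcongr
    calc v * (E (l - 1) / E l) = v / (E l / E (l - 1)) := by field_simp
      _ ≤ v / w := by gcongr
  have hrpow : v ^ (1 / ((k : ℝ) - l) - 1) = w / v := by
    rw [Real.rpow_sub hv0, Real.rpow_one, hdR, one_div]
  calc (1 : ℝ) = 1 / d * (w / v) * (d * w ^ (d - 1)) := by
        rw [← hvw]; field_simp
    _ ≤ 1 / d * (w / v) * (k * (E (k - 1) / E l) - l * v * (E (l - 1) / E l)) := by
        gcongr
        rw [← hdR]
        nlinarith [hI, hII]
    _ = traceFactor E k l := by rw [traceFactor, hrpow, hdR]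

theorem sum_Fii_eq {n k l : ℕ} (hlk : l < k) (hkn : k ≤ n) (x : Fin n → ℝ)
    (hl : 0 < esymmMean n l x) (hk : 0 < esymmMean n k x) :
    ∑ i : Fin n,
        (1 / ((k : ℝ) - (l : ℝ))) *
          (esymm n k x / esymm n l x) ^ ((1 : ℝ) / ((k : ℝ) - (l : ℝ)) - 1) *
          ((esymmDel n (k - 1) x i * esymm n l x -
              esymm n k x * esymmDelZ n ((l : ℤ) - 1) x i) / (esymm n l x) ^ 2) =
      ((n.choose k : ℝ) / (n.choose l : ℝ)) ^ ((1 : ℝ) / ((k : ℝ) - (l : ℝ))) *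
        traceFactor (fun j => esymmMean n j x) k l := by
  have hCk : (0 : ℝ) < n.choose k := by exact_mod_cast Nat.choose_pos hkn
  have hCl : (0 : ℝ) < n.choose l := by exact_mod_cast Nat.choose_pos (by omega)
  rw [← mul_sum, ← sum_div, sum_sub_distrib, ← sum_mul, ← mul_sum,
    sum_esymmDel_pred (by omega) hkn, sum_esymmDelZ_pred (by omega),
    esymm_eq_choose_mul_esymmMean hkn, esymm_eq_choose_mul_esymmMean (by omega : l ≤ n),
    traceFactor, mul_div_mul_comm, Real.mul_rpow (div_pos hCk hCl).le (div_pos hk hl).le,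
    Real.rpow_sub (div_pos hCk hCl), Real.rpow_one]
  field_simp

/-- For F(λ) = [σ_k(λ)/σ_l(λ)]^{1/(k-l)} with 0 ≤ l < k ≤ n and λ ∈ Γ_k,
Σ_i F^{ii}(λ) ≥ (C(n,k)/C(n,l))^{1/(k-l)}, where
F^{ii} = (1/(k-l)) (σ_k/σ_l)^{1/(k-l)-1} (σ_{k-1}(λ|i)σ_l - σ_k σ_{l-1}(λ|i))/σ_l². -/
theorem sum_Fii_ge (n k l : ℕ) (hlk : l < k) (hkn : k ≤ n)
    (x : Fin n → ℝ) (hx : x ∈ gardingCone n k) :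
    ((n.choose k : ℝ) / (n.choose l : ℝ)) ^ ((1 : ℝ) / ((k : ℝ) - (l : ℝ))) ≤
      ∑ i : Fin n,
        (1 / ((k : ℝ) - (l : ℝ))) *
          (esymm n k x / esymm n l x) ^ ((1 : ℝ) / ((k : ℝ) - (l : ℝ)) - 1) *
          ((esymmDel n (k - 1) x i * esymm n l x -
              esymm n k x * esymmDelZ n ((l : ℤ) - 1) x i) / (esymm n l x) ^ 2) := by
  have hpos : ∀ j ≤ k, 0 < esymmMean n j x := by
    intro j hj
    rcases Nat.eq_zero_or_pos j with rfl | hj0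
    · simp [esymmMean, esymm]
    · exact div_pos (hx j hj0 hj) (by exact_mod_cast Nat.choose_pos (hj.trans hkn))
  rw [sum_Fii_eq hlk hkn x (hpos l hlk.le) (hpos k le_rfl)]
  exact le_mul_of_one_le_right (by positivity) <|
    one_le_traceFactor hlk hpos fun j hj => esymmMean_mul_le_sq (hj.trans hkn) x
end
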